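/- For any vectors l, m ∈ ℤ³ \ {0} with l ≠ ±m, and u_l ∈ l^⊥, u_m ∈ m^⊥ (vectors in ℝ³ orthogonal to l and m respectively), the Fourier coefficient of the projected Navier–Stokes nonlinearity at frequency l+m satisfies B_{l+m}(u_l e_l, u_m e_m) = (1/2)(u_l · m) P_{l+m} u_m, where P_k η = η − (k·η/|k|²) k is the orthogonal projection of ℝ³ onto k^⊥. -/

import Mathlib

open MeasureTheory Real

/-- `ℤ³₊`: the first nonzero coordinate is positive. -/
def Zplus (k : Fin 3 → ℤ) : Prop :=
  0 < k 0 ∨ (k 0 = 0 ∧ 0 < k 1) ∨ (k 0 = 0 ∧ k 1 = 0 ∧ 0 < k 2)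

instance : DecidablePred Zplus := fun k => by unfold Zplus; infer_instance

/-- The Fourier basis functions on the torus `[0,2π]³`:
`e_k(x) = cos(k·x)` for `k ∈ ℤ³₊` and `e_k(x) = sin(k·x)` otherwise. -/
noncomputable def fourierE (k : Fin 3 → ℤ) (x : Fin 3 → ℝ) : ℝ :=
  if Zplus k then Real.cos (∑ i, (k i : ℝ) * x i) else Real.sin (∑ i, (k i : ℝ) * x i)

/-- The fundamental domain `[0,2π]³` of the torus. -/
noncomputable def torusBox : Set (Fin 3 → ℝ) :=
  Set.univ.pi fun _ => Set.Ioc 0 (2 * Real.pi)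

/-- The Fourier coefficient at frequency `k` of a vector field `f` on the torus,
with respect to the (non-normalized) basis `e_k`, i.e. `f = ∑ₖ (coeff k f) e_k`. -/
noncomputable def nsFourierCoeff (k : Fin 3 → ℤ) (f : (Fin 3 → ℝ) → (Fin 3 → ℝ)) :
    Fin 3 → ℝ :=
  (4 * Real.pi ^ 3)⁻¹ • ∫ x in torusBox, fourierE k x • f x

/-- The orthogonal projection `P_k` of `ℝ³` onto `k^⊥`. -/
noncomputable def projPerp (k : Fin 3 → ℤ) (η : Fin 3 → ℝ) : Fin 3 → ℝ :=
  η - ((∑ i, (k i : ℝ) * η i) / (∑ i, (k i : ℝ) ^ 2)) • fun i => (k i : ℝ)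

/-!
Because `l`, `-m` and `l + m` lie in `ℤ³₊`, the three basis functions are cosines, and the
product-to-sum formula turns `cos((l+m)·x) cos(l·x) cos(m·x)` into
`¼ (1 + cos(2l·x) + cos(2m·x) + cos(2(l+m)·x))`. Over the torus `∫ cos(k·x)` vanishes for
`k ≠ 0` (it is the real part of `∫ e^{ik·x}`, which factors into one-dimensional integrals), so
only the constant term survives and the coefficient is `½ (u_l · m) u_m`; `P_{l+m}` is linear.
-/

section PiIoc

variable {ι : Type*} [Fintype ι]

theorem integral_exp_intCast_mul_I_Ioc (k : ℤ) :
    ∫ t in Set.Ioc 0 (2 * π), Complex.exp (k * t * Complex.I) = if k = 0 then 2 * π else 0 := by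
  rw [← intervalIntegral.integral_of_le two_pi_pos.le]
  split_ifs with hk
  · simp [hk]
  · have hc : (k : ℂ) * Complex.I ≠ 0 := mul_ne_zero (Int.cast_ne_zero.2 hk) Complex.I_ne_zero
    simp_rw [mul_right_comm _ _ Complex.I]
    rw [integral_exp_mul_complex hc, Complex.ofReal_zero, mul_zero, Complex.exp_zero,
      div_eq_zero_iff, sub_eq_zero]
    left
    convert Complex.exp_int_mul_two_pi_mul_I k using 2
    push_cast
    ring

theorem integral_exp_sum_intCast_mul_I_pi_Ioc (k : ι → ℤ) :
    ∫ x in Set.univ.pi fun _ : ι => Set.Ioc 0 (2 * π),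
        Complex.exp ((∑ i, (k i : ℂ) * x i) * Complex.I)
      = if k = 0 then (2 * π) ^ Fintype.card ι else 0 := by
  rw [volume_pi, Measure.restrict_pi_pi]
  simp_rw [Finset.sum_mul, Complex.exp_sum]
  rw [integral_fintype_prod_eq_prod (fun i (t : ℝ) => Complex.exp (k i * t * Complex.I))]
  simp_rw [integral_exp_intCast_mul_I_Ioc, ← Complex.ofReal_prod, Finset.prod_ite_zero,
    Finset.prod_const, Finset.card_univ, Finset.mem_univ, true_imp_iff, funext_iff,
    Pi.zero_apply]

theorem Continuous.integrableOn_univ_pi_Ioc {E : Type*} [NormedAddCommGroup E]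
    {f : (ι → ℝ) → E} (hf : Continuous f) (a b : ι → ℝ) :
    IntegrableOn f (Set.univ.pi fun i => Set.Ioc (a i) (b i)) :=
  (hf.continuousOn.integrableOn_compact (isCompact_univ_pi fun _ => isCompact_Icc)).mono_set
    (Set.pi_mono fun _ _ => Set.Ioc_subset_Icc_self)

theorem integral_cos_sum_intCast_mul_pi_Ioc (k : ι → ℤ) :
    ∫ x in Set.univ.pi fun _ : ι => Set.Ioc 0 (2 * π), cos (∑ i, (k i : ℝ) * x i)
      = if k = 0 then (2 * π) ^ Fintype.card ι else 0 := by
  have hre : ∀ x : ι → ℝ, cos (∑ i, (k i : ℝ) * x i)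
      = RCLike.re (Complex.exp ((∑ i, (k i : ℂ) * x i) * Complex.I)) := fun x => by
    rw [RCLike.re_to_complex, ← Complex.exp_ofReal_mul_I_re]
    push_cast
    rfl
  simp_rw [hre]
  rw [integral_re (Continuous.integrableOn_univ_pi_Ioc
      (f := fun x : ι → ℝ => Complex.exp ((∑ i, (k i : ℂ) * x i) * Complex.I)) (by fun_prop) _ _),
    integral_exp_sum_intCast_mul_I_pi_Ioc]
  split_ifs <;> norm_cast

theorem setIntegral_one_pi_Ioc :
    ∫ _ in Set.univ.pi fun _ : ι => Set.Ioc 0 (2 * π), (1 : ℝ) = (2 * π) ^ Fintype.card ι := by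
  rw [setIntegral_const, measureReal_def, volume_pi_Ioc_toReal (fun _ => two_pi_pos.le)]
  simp

theorem cos_add_mul_cos_mul_cos (a b : ℝ) :
    cos (a + b) * cos a * cos b = (1 + cos (2 * a) + cos (2 * b) + cos (2 * (a + b))) / 4 := by
  rw [cos_two_mul, cos_two_mul, cos_two_mul, cos_add]
  linear_combination (cos b ^ 2 - 1) / 2 * sin_sq_add_cos_sq a - sin a ^ 2 / 2 * sin_sq_add_cos_sq b

theorem integral_cos_add_mul_cos_mul_cos_pi_Ioc {k k' : ι → ℤ} (hk : k ≠ 0) (hk' : k' ≠ 0)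
    (hkk' : k + k' ≠ 0) :
    ∫ x in Set.univ.pi fun _ : ι => Set.Ioc 0 (2 * π),
        cos (∑ i, (k i : ℝ) * x i + ∑ i, (k' i : ℝ) * x i) * cos (∑ i, (k i : ℝ) * x i)
          * cos (∑ i, (k' i : ℝ) * x i)
      = (2 * π) ^ Fintype.card ι / 4 := by
  have hadd : ∀ x : ι → ℝ,
      ∑ i, (k i : ℝ) * x i + ∑ i, (k' i : ℝ) * x i = ∑ i, ((k + k') i : ℝ) * x i :=
    fun x => by simp [add_mul, Finset.sum_add_distrib]
  have htwo : ∀ (j : ι → ℤ) (x : ι → ℝ),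
      2 * ∑ i, (j i : ℝ) * x i = ∑ i, ((2 • j) i : ℝ) * x i :=
    fun j x => by simp [Finset.mul_sum, mul_assoc]
  simp_rw [cos_add_mul_cos_mul_cos, hadd, htwo]
  rw [integral_div, integral_add, integral_add, integral_add, setIntegral_one_pi_Ioc,
    integral_cos_sum_intCast_mul_pi_Ioc, integral_cos_sum_intCast_mul_pi_Ioc,
    integral_cos_sum_intCast_mul_pi_Ioc, if_neg (smul_ne_zero two_ne_zero hk),
    if_neg (smul_ne_zero two_ne_zero hk'), if_neg (smul_ne_zero two_ne_zero hkk')]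
  · ring
  all_goals exact Continuous.integrableOn_univ_pi_Ioc (by fun_prop) _ _

end PiIoc

theorem Zplus.ne_zero {k : Fin 3 → ℤ} (h : Zplus k) : k ≠ 0 := by
  rintro rfl
  simp [Zplus] at h

theorem fourierE_of_zplus {k : Fin 3 → ℤ} (h : Zplus k) (x : Fin 3 → ℝ) :
    fourierE k x = cos (∑ i, (k i : ℝ) * x i) :=
  if_pos h

theorem projPerp_smul (k : Fin 3 → ℤ) (r : ℝ) (η : Fin 3 → ℝ) :
    projPerp k (r • η) = r • projPerp k η := by
  simp only [projPerp, Pi.smul_apply, smul_eq_mul, mul_left_comm _ r, ← Finset.mul_sum,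
    mul_div_assoc, smul_sub, smul_smul]

theorem integral_fourierE_add_mul_fourierE_mul_fourierE_neg {l m : Fin 3 → ℤ} (hl : Zplus l)
    (hm : Zplus (-m)) (hlm : Zplus (l + m)) :
    ∫ x in torusBox, fourierE (l + m) x * fourierE l x * fourierE (-m) x = 2 * π ^ 3 := by
  have hm0 : m ≠ 0 := neg_ne_zero.mp hm.ne_zero
  simp only [fourierE_of_zplus hl, fourierE_of_zplus hm, fourierE_of_zplus hlm, Pi.add_apply,
    Pi.neg_apply, Int.cast_add, Int.cast_neg, add_mul, neg_mul, Finset.sum_add_distrib,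
    Finset.sum_neg_distrib, cos_neg]
  rw [torusBox, integral_cos_add_mul_cos_mul_cos_pi_Ioc hl.ne_zero hm0 hlm.ne_zero,
    Fintype.card_fin]
  ring

/-- Since `-m ∈ ℤ³₊`, `e_m = sin(m·x)` has gradient `e_{-m} m`, so
`(u_l e_l · ∇)(u_m e_m) = (u_l · m) e_l e_{-m} u_m`, and the Leray projection acts on its
coefficient at `l + m` as `P_{l+m}`. -/
theorem nonlinearity_fourier_coefficient_general
    (l m : Fin 3 → ℤ) (hl : Zplus l) (hm : Zplus (-m)) (hlm : Zplus (l + m))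
    (ul um : Fin 3 → ℝ) :
    projPerp (l + m)
        (nsFourierCoeff (l + m)
          (fun x => ((∑ i, ul i * (m i : ℝ)) * fourierE l x * fourierE (-m) x) • um))
      = ((1 / 2) * ∑ i, ul i * (m i : ℝ)) • projPerp (l + m) um := by
  set c := ∑ i, ul i * (m i : ℝ)
  have hintegrand : ∀ x, fourierE (l + m) x • (c * fourierE l x * fourierE (-m) x) • um
      = (c * (fourierE (l + m) x * fourierE l x * fourierE (-m) x)) • um := fun x => by
    rw [smul_smul]
    congr 1
    ring
  have hcoeff : nsFourierCoeff (l + m) (fun x => (c * fourierE l x * fourierE (-m) x) • um)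
      = ((1 / 2) * c) • um := by
    rw [nsFourierCoeff, funext hintegrand, integral_smul_const, integral_const_mul,
      integral_fourierE_add_mul_fourierE_mul_fourierE_neg hl hm hlm, smul_smul]
    congr 1
    field_simp
    ring
  rw [hcoeff, projPerp_smul]

/-- For `l, -m, l+m ∈ ℤ³₊`, `l ≠ ±m`, `u_l ⊥ l`, `u_m ⊥ m`, the Fourier
coefficient at frequency `l+m` of the Leray-projected advection term
`B(u_l e_l, u_m e_m) = P((u_l e_l · ∇)(u_m e_m))`, whose unprojected integrand is
`(u_l · m) e_l(x) e_{-m}(x) u_m`, equals `½ (u_l · m) P_{l+m} u_m`. -/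
theorem nonlinearity_fourier_coefficient
    (l m : Fin 3 → ℤ) (hl : Zplus l) (hm : Zplus (-m)) (hlm : Zplus (l + m))
    (hne : l ≠ m) (hne' : l ≠ -m)
    (ul um : Fin 3 → ℝ)
    (hul : (∑ i, ul i * (l i : ℝ)) = 0) (hum : (∑ i, um i * (m i : ℝ)) = 0) :
    projPerp (l + m)
        (nsFourierCoeff (l + m)
          (fun x => ((∑ i, ul i * (m i : ℝ)) * fourierE l x * fourierE (-m) x) • um))
      = ((1 / 2) * ∑ i, ul i * (m i : ℝ)) • projPerp (l + m) um :=
  nonlinearity_fourier_coefficient_general l m hl hm hlm ul um
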